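/- For mixed birth-death/death-birth updating on the cycle with mixing parameter δ ∈ [0,1] and r ≥ 1, the forward bias of any state s with 1 < |s| < N−1 satisfies γ_s^δ ≤ r, with equality when the mutants form a single cluster. -/

import Mathlib

/-- Forward bias of a state on the cycle of `N` individuals with `m` mutants of fitness
`r`, under mixed birth-death/death-birth updating with mixing parameter `δ`
(DB with probability `δ`, BD with probability `1−δ`):
`γ_s^δ = [(1−δ)·r(xA+yA)/(mr+N−m) + δ·(xB + (2r/(1+r))yB)/N]
       / [(1−δ)·(xA+yA)/(mr+N−m) + δ·(xA + (2/(1+r))yA)/N]`. -/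
noncomputable def gammaMix (N m : ℕ) (r δ : ℝ) (xA yA xB yB : ℕ) : ℝ :=
  ((1 - δ) * (r * ((xA : ℝ) + yA)) / (m * r + ((N : ℝ) - m)) +
      δ * ((xB : ℝ) + (2 * r / (1 + r)) * yB) / N) /
  ((1 - δ) * ((xA : ℝ) + yA) / (m * r + ((N : ℝ) - m)) +
      δ * ((xA : ℝ) + (2 / (1 + r)) * yA) / N)

/-! Both `gammaMix` and `r` compare two mixtures with the same weights `1 - δ` and `δ`, so it
suffices to bound each part of the numerator by `r` times the matching part of the denominator.
For the BD parts this is an equality. For the DB parts, `r ≥ 1` gives `1 ≤ 2r/(1+r) ≤ r` and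
`2/(1+r) ≤ 1`, so, as `xA + yA = xB + yB`,
`xB + (2r/(1+r)) yB ≤ (2r/(1+r)) (xB + yB) = r (2/(1+r)) (xA + yA) ≤ r (xA + (2/(1+r)) yA)`. -/

section Mixture

variable {p₁ p₂ q₁ q₂ r δ : ℝ}

lemma mixture_pos (hq₁ : 0 < q₁) (hq₂ : 0 < q₂) (hδ0 : 0 ≤ δ) (hδ1 : δ ≤ 1) :
    0 < (1 - δ) * q₁ + δ * q₂ := by
  simpa using convex_Ioi (0 : ℝ) hq₁ hq₂ (sub_nonneg.2 hδ1) hδ0 (by ring)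

lemma mixture_nonneg (hq₁ : 0 ≤ q₁) (hq₂ : 0 ≤ q₂) (hδ0 : 0 ≤ δ) (hδ1 : δ ≤ 1) :
    0 ≤ (1 - δ) * q₁ + δ * q₂ := by
  simpa using convex_Ici (0 : ℝ) hq₁ hq₂ (sub_nonneg.2 hδ1) hδ0 (by ring)

lemma mixture_div_mixture_le (hr : 0 ≤ r) (hδ0 : 0 ≤ δ) (hδ1 : δ ≤ 1)
    (hq₁ : 0 ≤ q₁) (hq₂ : 0 ≤ q₂) (hp₁ : p₁ ≤ r * q₁) (hp₂ : p₂ ≤ r * q₂) :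
    ((1 - δ) * p₁ + δ * p₂) / ((1 - δ) * q₁ + δ * q₂) ≤ r := by
  refine div_le_of_le_mul₀ (mixture_nonneg hq₁ hq₂ hδ0 hδ1) hr ?_
  calc (1 - δ) * p₁ + δ * p₂ ≤ (1 - δ) * (r * q₁) + δ * (r * q₂) := by
        gcongr
    _ = r * ((1 - δ) * q₁ + δ * q₂) := by ring

end Mixture

lemma db_gain_le_mul_db_loss {r xA yA xB yB : ℝ} (hr : 1 ≤ r) (hxA : 0 ≤ xA) (hxB : 0 ≤ xB)
    (hclusters : xA + yA = xB + yB) :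
    xB + 2 * r / (1 + r) * yB ≤ r * (xA + 2 / (1 + r) * yA) := by
  have hgain : 1 ≤ 2 * r / (1 + r) := by rw [le_div_iff₀ (by linarith)]; linarith
  have hloss : 2 / (1 + r) ≤ 1 := by rw [div_le_iff₀ (by linarith)]; linarith
  calc xB + 2 * r / (1 + r) * yB ≤ 2 * r / (1 + r) * (xB + yB) := by nlinarith
    _ = r * (2 / (1 + r) * (xA + yA)) := by rw [hclusters]; ring
    _ ≤ r * (xA + 2 / (1 + r) * yA) := by gcongr; nlinarith

lemma bd_denom_nonneg {N m : ℕ} {r : ℝ} (hr : 1 ≤ r) : 0 ≤ (m : ℝ) * r + ((N : ℝ) - m) := by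
  nlinarith [mul_nonneg m.cast_nonneg (sub_nonneg.2 hr), N.cast_nonneg (α := ℝ)]

lemma bd_denom_pos {N m : ℕ} {r : ℝ} (hr : 1 ≤ r) (hN : 0 < N) :
    0 < (m : ℝ) * r + ((N : ℝ) - m) := by
  have : (0 : ℝ) < N := by exact_mod_cast hN
  nlinarith [mul_nonneg m.cast_nonneg (sub_nonneg.2 hr)]

lemma gammaMix_le {N m xA yA xB yB : ℕ} {r δ : ℝ} (hr : 1 ≤ r) (hδ0 : 0 ≤ δ) (hδ1 : δ ≤ 1)
    (hclusters : xA + yA = xB + yB) : gammaMix N m r δ xA yA xB yB ≤ r := by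
  have hD := bd_denom_nonneg (N := N) (m := m) hr
  have hloss : 0 ≤ (xA : ℝ) + 2 / (1 + r) * yA := by
    have : 0 ≤ 2 / (1 + r) := div_nonneg zero_le_two (by linarith)
    positivity
  unfold gammaMix
  simp only [mul_div_assoc (1 - δ), mul_div_assoc δ]
  refine mixture_div_mixture_le (by linarith) hδ0 hδ1 (div_nonneg (by positivity) hD)
    (div_nonneg hloss N.cast_nonneg) (by rw [mul_div_assoc]) ?_
  rw [← mul_div_assoc]
  gcongr
  exact db_gain_le_mul_db_loss hr (by positivity) (by positivity) (by exact_mod_cast hclusters)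

lemma gammaMix_single_cluster {N m : ℕ} {r δ : ℝ} (hr : 1 ≤ r) (hδ0 : 0 ≤ δ) (hδ1 : δ ≤ 1)
    (hN : 0 < N) : gammaMix N m r δ 0 1 0 1 = r := by
  have hden : 0 < (1 - δ) * (1 / ((m : ℝ) * r + ((N : ℝ) - m))) + δ * (2 / (1 + r) / N) :=
    mixture_pos (one_div_pos.2 (bd_denom_pos hr hN))
      (div_pos (div_pos two_pos (by linarith)) (by exact_mod_cast hN)) hδ0 hδ1
  simp only [gammaMix, Nat.cast_zero, Nat.cast_one, zero_add, mul_one]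
  rw [div_eq_iff (by convert hden.ne' using 1; ring)]
  ring

theorem mixed_bias_le_r_general (N m xA yA xB yB : ℕ) (r δ : ℝ)
    (hr : 1 ≤ r) (hδ0 : 0 ≤ δ) (hδ1 : δ ≤ 1)
    (hm2 : m < N - 1)
    (hclusters : xA + yA = xB + yB) :
    gammaMix N m r δ xA yA xB yB ≤ r ∧ gammaMix N m r δ 0 1 0 1 = r := by
  have hN : 0 < N := by omega
  exact ⟨gammaMix_le hr hδ0 hδ1 hclusters, gammaMix_single_cluster hr hδ0 hδ1 hN⟩

/-- For mixed BD/DB updating on the cycle with mixing parameter `δ ∈ [0,1]` and `r ≥ 1`,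
the forward bias of any state with `1 < m < N−1` mutants satisfies `γ_s^δ ≤ r`, with
equality when the mutants form a single cluster (`xA = xB = 0`, `yA = yB = 1`). -/
theorem mixed_bias_le_r (N m xA yA xB yB : ℕ) (r δ : ℝ)
    (hr : 1 ≤ r) (hδ0 : 0 ≤ δ) (hδ1 : δ ≤ 1)
    (hm1 : 1 < m) (hm2 : m < N - 1)
    (hclusters : xA + yA = xB + yB) (hcl1 : 1 ≤ xA + yA)
    (hsizeA : xA + 2 * yA ≤ m) (hsizeB : xB + 2 * yB ≤ N - m) :
    gammaMix N m r δ xA yA xB yB ≤ r ∧ gammaMix N m r δ 0 1 0 1 = r :=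
  mixed_bias_le_r_general N m xA yA xB yB r δ hr hδ0 hδ1 hm2 hclusters
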